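/- arXiv:1504.05267 — 4 statements merged into one kernel-verified Lean document; each statement's English description precedes it below -/
import Mathlib

section
/- Given the data of a potential SOACC C satisfying conditions (1), (2), and (4), the remaining condition (3) (the existence of the structure function ℓ expressing f ∘ c_S in terms of the c_{S'} modulo lower terms) is equivalent to the statement that C_{≤λ} is a two-sided ideal for all λ ∈ Λ. -/
/-!
In `Hom(λ, Z)` the only basis elements of cell `λ` are the `c_{S'}`, because `E(λ, λ) = {*}` and
`c_* = 1`. Hence condition (3) says exactly that `c_S ≫ f ∈ C_{≤λ}` for all `S` and `f`, which
follows at once from `C_{≤λ}` being an ideal.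

Conversely, to see that `C_{≤λ}` is closed under postcomposition it suffices to treat a basis
element `c_T ≫ c_S` of a cell `μ ≤ λ`, and by (3) `c_S ≫ g` is a combination of the `c_{S'}`
plus an element of `C_{<μ}(μ, Z)`. The first part gives basis elements `c_T ≫ c_{S'}` of cell
`μ`; the second is handled by well-founded induction on `λ`, using that the `C_{≤ν}`, `ν < λ`,
are closed under precomposition. Closure under precomposition follows from closure under
postcomposition by applying the involution `ι`.
-/

open CategoryTheory

universe w v u

/-- The data of a potential SOACC over `R`, satisfying conditions (1), (2) and (4)
but not necessarily condition (3). -/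
structure PreSOACC (R : Type*) [CommRing R] where
  /-- the underlying category -/
  C : Type u
  [instCat : Category.{v} C]
  [instPre : Preadditive C]
  [instLin : Linear R C]
  /-- the cell poset -/
  Λ : Type w
  [instPO : PartialOrder Λ]
  /-- descending chain condition -/
  dcc : WellFoundedLT Λ
  /-- the identification of `Λ` with a set of objects of `C` -/
  obj : Λ → C
  obj_inj : Function.Injective obj
  /-- the index sets `M(λ, X)` -/
  M : Λ → C → Type w
  /-- the index sets `E(X, λ)` -/
  E : C → Λ → Type w
  [instFinM : ∀ l X, Fintype (M l X)]
  [instFinE : ∀ X l, Fintype (E X l)]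
  /-- the fixed bijection `ι : M(λ,X) ≃ E(X,λ)` -/
  bij : ∀ l X, M l X ≃ E X l
  /-- cellular structure morphisms `c_S : λ ⟶ X` -/
  cM : ∀ {l X}, M l X → (obj l ⟶ X)
  /-- cellular structure morphisms `c_T : X ⟶ λ` -/
  cE : ∀ {X l}, E X l → (X ⟶ obj l)
  /-- axiom (1): the `c^λ_{S,T} = c_S ∘ c_T` are linearly independent ... -/
  basis_indep : ∀ X Y : C,
    LinearIndependent R (fun p : Σ l : Λ, E X l × M l Y => cE p.2.1 ≫ cM p.2.2)
  /-- ... and span `Hom(X,Y)` -/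
  basis_span : ∀ X Y : C,
    Submodule.span R (Set.range (fun p : Σ l : Λ, E X l × M l Y => cE p.2.1 ≫ cM p.2.2)) = ⊤
  /-- axiom (2): an `R`-linear contravariant involution ι -/
  invol : ∀ X Y : C, (X ⟶ Y) →ₗ[R] (Y ⟶ X)
  invol_comp : ∀ {X Y Z : C} (f : X ⟶ Y) (g : Y ⟶ Z),
    invol X Z (f ≫ g) = invol Y Z g ≫ invol X Y f
  invol_id : ∀ X : C, invol X X (𝟙 X) = 𝟙 X
  invol_invol : ∀ {X Y : C} (f : X ⟶ Y), invol Y X (invol X Y f) = f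
  invol_cM : ∀ {l X} (S : M l X), invol (obj l) X (cM S) = cE (bij l X S)
  /-- axiom (4): `M(λ,λ)` is a single point `*` ... -/
  ptM : ∀ l, M l (obj l)
  ptM_unique : ∀ l (S : M l (obj l)), S = ptM l
  ptE_unique : ∀ l (T : E (obj l) l), T = bij l (obj l) (ptM l)
  /-- ... with `c_* = 𝟙_λ` -/
  cM_pt : ∀ l, cM (ptM l) = 𝟙 (obj l)
  cE_pt : ∀ l, cE (bij l (obj l) (ptM l)) = 𝟙 (obj l)

attribute [instance] PreSOACC.instCat PreSOACC.instPre PreSOACC.instLin PreSOACC.instPO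
  PreSOACC.instFinM PreSOACC.instFinE

variable {R : Type*} [CommRing R]

/-- The ideal `C_{≤λ}`: the `R`-span of the cellular basis elements in cells `≤ λ`. -/
def PreSOACC.idealLE (S : PreSOACC R) (l : S.Λ) (X Y : S.C) : Submodule R (X ⟶ Y) :=
  Submodule.span R {h : X ⟶ Y | ∃ m : S.Λ, m ≤ l ∧
    ∃ (T : S.E X m) (S' : S.M m Y), h = S.cE T ≫ S.cM S'}

/-- The ideal `C_{<λ}`. -/
def PreSOACC.idealLT (S : PreSOACC R) (l : S.Λ) (X Y : S.C) : Submodule R (X ⟶ Y) :=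
  Submodule.span R {h : X ⟶ Y | ∃ m : S.Λ, m < l ∧
    ∃ (T : S.E X m) (S' : S.M m Y), h = S.cE T ≫ S.cM S'}

namespace PreSOACC

variable (S : PreSOACC R)

def IsPostcompClosed (l : S.Λ) : Prop :=
  ∀ (X Y Z : S.C) (f : X ⟶ Y) (g : Y ⟶ Z), f ∈ S.idealLE l X Y → f ≫ g ∈ S.idealLE l X Z

def IsPrecompClosed (l : S.Λ) : Prop :=
  ∀ (W X Y : S.C) (f : X ⟶ Y) (h : W ⟶ X), f ∈ S.idealLE l X Y → h ≫ f ∈ S.idealLE l W Y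

lemma idealLE_le_iff {l : S.Λ} {X Y : S.C} {N : Submodule R (X ⟶ Y)} :
    S.idealLE l X Y ≤ N ↔ ∀ m ≤ l, ∀ (T : S.E X m) (s : S.M m Y), S.cE T ≫ S.cM s ∈ N := by
  refine Submodule.span_le.trans ⟨fun h m hm T s => h ⟨m, hm, T, s, rfl⟩, ?_⟩
  rintro h _ ⟨m, hm, T, s, rfl⟩
  exact h m hm T s

lemma cE_comp_cM_mem_idealLE {l m : S.Λ} (hm : m ≤ l) {X Y : S.C} (T : S.E X m)
    (s : S.M m Y) : S.cE T ≫ S.cM s ∈ S.idealLE l X Y :=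
  Submodule.subset_span ⟨m, hm, T, s, rfl⟩

lemma cE_comp_cM_mem_idealLT {l m : S.Λ} (hm : m < l) {X Y : S.C} (T : S.E X m)
    (s : S.M m Y) : S.cE T ≫ S.cM s ∈ S.idealLT l X Y :=
  Submodule.subset_span ⟨m, hm, T, s, rfl⟩

lemma idealLT_le_idealLE (l : S.Λ) (X Y : S.C) : S.idealLT l X Y ≤ S.idealLE l X Y :=
  Submodule.span_mono fun _ ⟨m, hm, rest⟩ => ⟨m, hm.le, rest⟩

lemma idealLE_mono {l m : S.Λ} (h : m ≤ l) (X Y : S.C) : S.idealLE m X Y ≤ S.idealLE l X Y :=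
  S.idealLE_le_iff.2 fun _ hm' T s => S.cE_comp_cM_mem_idealLE (hm'.trans h) T s

lemma cE_eq_id (l : S.Λ) (T : S.E (S.obj l) l) : S.cE T = 𝟙 (S.obj l) := by
  rw [S.ptE_unique l T, S.cE_pt]

lemma cM_mem_idealLE (l : S.Λ) {Y : S.C} (s : S.M l Y) : S.cM s ∈ S.idealLE l (S.obj l) Y := by
  simpa only [S.cE_eq_id, Category.id_comp] using
    S.cE_comp_cM_mem_idealLE le_rfl (S.bij l (S.obj l) (S.ptM l)) s

lemma idealLE_obj_eq (l : S.Λ) (Z : S.C) :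
    S.idealLE l (S.obj l) Z =
      Submodule.span R (Set.range (S.cM (l := l) (X := Z))) ⊔ S.idealLT l (S.obj l) Z := by
  refine le_antisymm (S.idealLE_le_iff.2 fun m hm T s => ?_)
    (sup_le ?_ (S.idealLT_le_idealLE l _ _))
  · rcases hm.lt_or_eq with hlt | rfl
    · exact Submodule.mem_sup_right (S.cE_comp_cM_mem_idealLT hlt T s)
    · rw [S.cE_eq_id, Category.id_comp]
      exact Submodule.mem_sup_left (Submodule.subset_span ⟨s, rfl⟩)
  · rw [Submodule.span_le]
    rintro _ ⟨s, rfl⟩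
    exact S.cM_mem_idealLE l s

lemma mem_idealLE_obj_iff {l : S.Λ} {Z : S.C} {h : S.obj l ⟶ Z} :
    h ∈ S.idealLE l (S.obj l) Z ↔
      ∃ a : S.M l Z → R, h - ∑ s, a s • S.cM s ∈ S.idealLT l (S.obj l) Z := by
  rw [idealLE_obj_eq, Submodule.mem_sup]
  constructor
  · rintro ⟨_, hy, z, hz, rfl⟩
    obtain ⟨a, rfl⟩ := (Submodule.mem_span_range_iff_exists_fun R).1 hy
    exact ⟨a, by rwa [add_sub_cancel_left]⟩
  · rintro ⟨a, ha⟩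
    exact ⟨_, (Submodule.mem_span_range_iff_exists_fun R).2 ⟨a, rfl⟩, _, ha, add_sub_cancel _ _⟩

lemma condition3_iff_cM_comp_mem_idealLE :
    (∃ ell : ∀ (l : S.Λ) (Y Z : S.C), (Y ⟶ Z) → S.M l Y → S.M l Z → R,
      ∀ (l : S.Λ) (Y Z : S.C) (f : Y ⟶ Z) (s : S.M l Y),
        S.cM s ≫ f - ∑ s' : S.M l Z, ell l Y Z f s s' • S.cM s' ∈
          S.idealLT l (S.obj l) Z) ↔
    ∀ (l : S.Λ) (Y Z : S.C) (f : Y ⟶ Z) (s : S.M l Y), S.cM s ≫ f ∈ S.idealLE l (S.obj l) Z := by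
  refine ⟨fun ⟨ell, hell⟩ l Y Z f s => S.mem_idealLE_obj_iff.2 ⟨_, hell l Y Z f s⟩, fun h => ?_⟩
  choose ell hell using fun l Y Z f s => S.mem_idealLE_obj_iff.1 (h l Y Z f s)
  exact ⟨ell, hell⟩

lemma invol_cE {m : S.Λ} {X : S.C} (T : S.E X m) :
    S.invol X (S.obj m) (S.cE T) = S.cM ((S.bij m X).symm T) := by
  rw [← S.invol_invol (S.cM _), S.invol_cM, Equiv.apply_symm_apply]

lemma invol_mem_idealLE {l : S.Λ} {X Y : S.C} {f : X ⟶ Y} (hf : f ∈ S.idealLE l X Y) :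
    S.invol X Y f ∈ S.idealLE l Y X := by
  refine (S.idealLE_le_iff (N := (S.idealLE l Y X).comap (S.invol X Y))).2 (fun m hm T s => ?_) hf
  rw [Submodule.mem_comap, S.invol_comp, S.invol_cM, S.invol_cE]
  exact S.cE_comp_cM_mem_idealLE hm _ _

lemma IsPostcompClosed.isPrecompClosed {l : S.Λ} (h : S.IsPostcompClosed l) :
    S.IsPrecompClosed l := by
  intro W X Y f g hf
  have := S.invol_mem_idealLE (h _ _ _ _ (S.invol W X g) (S.invol_mem_idealLE hf))
  rwa [← S.invol_comp, S.invol_invol] at this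

lemma cE_comp_mem_idealLE {l m : S.Λ} (hml : m ≤ l) (hpre : ∀ m' < l, S.IsPrecompClosed m')
    {X Z : S.C} (T : S.E X m) {r : S.obj m ⟶ Z} (hr : r ∈ S.idealLE m (S.obj m) Z) :
    S.cE T ≫ r ∈ S.idealLE l X Z := by
  refine (S.idealLE_le_iff (N := (S.idealLE l X Z).comap (Linear.leftComp R Z (S.cE T)))).2
    (fun m' hm' T' s => ?_) hr
  rw [Submodule.mem_comap, Linear.leftComp_apply]
  rcases hm'.lt_or_eq with hlt | rfl
  · have hlt' := hlt.trans_le hml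
    exact S.idealLE_mono hlt'.le X Z
      (hpre m' hlt' _ _ _ _ _ (S.cE_comp_cM_mem_idealLE le_rfl T' s))
  · rw [S.cE_eq_id, Category.id_comp]
    exact S.cE_comp_cM_mem_idealLE hml T s

lemma isPostcompClosed_and_isPrecompClosed
    (h : ∀ (l : S.Λ) (Y Z : S.C) (f : Y ⟶ Z) (s : S.M l Y),
      S.cM s ≫ f ∈ S.idealLE l (S.obj l) Z)
    (l : S.Λ) : S.IsPostcompClosed l ∧ S.IsPrecompClosed l := by
  have := S.dcc
  induction l using WellFoundedLT.induction with
  | _ l ih =>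
  have hpost : S.IsPostcompClosed l := fun X Y Z f g hf => by
    refine (S.idealLE_le_iff (N := (S.idealLE l X Z).comap (Linear.rightComp R X g))).2
      (fun m hm T s => ?_) hf
    rw [Submodule.mem_comap, Linear.rightComp_apply, Category.assoc]
    exact S.cE_comp_mem_idealLE hm (fun m' hm' => (ih m' hm').2) T (h m Y Z g s)
  exact ⟨hpost, hpost.isPrecompClosed⟩

end PreSOACC

/-- Given the data of a potential SOACC satisfying conditions (1), (2) and (4),
the remaining condition (3) — the existence of the structure function `ℓ` expressing
`f ∘ c_S` in terms of the `c_{S'}` modulo lower terms — is equivalent to the statement that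
`C_{≤λ}` is a two-sided ideal for all `λ ∈ Λ`. -/
theorem PreSOACC.condition3_iff_ideal (S : PreSOACC R) :
    (∃ ell : ∀ (l : S.Λ) (Y Z : S.C), (Y ⟶ Z) → S.M l Y → S.M l Z → R,
      ∀ (l : S.Λ) (Y Z : S.C) (f : Y ⟶ Z) (s : S.M l Y),
        S.cM s ≫ f - ∑ s' : S.M l Z, ell l Y Z f s s' • S.cM s' ∈
          S.idealLT l (S.obj l) Z) ↔
    (∀ l : S.Λ,
      (∀ (X Y Z : S.C) (f : X ⟶ Y) (g : Y ⟶ Z),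
        f ∈ S.idealLE l X Y → f ≫ g ∈ S.idealLE l X Z) ∧
      (∀ (W X Y : S.C) (f : X ⟶ Y) (h : W ⟶ X),
        f ∈ S.idealLE l X Y → h ≫ f ∈ S.idealLE l W Y)) :=
  S.condition3_iff_cM_comp_mem_idealLE.trans
    ⟨S.isPostcompClosed_and_isPrecompClosed,
      fun h l Y Z f s => (h l).1 _ _ _ _ f (S.cM_mem_idealLE l s)⟩
end

section
/- Let H := ⊕_X Hom(X,X) in a fibred SOACC and K := ⊕_λ A_λ·⟨1_λ⟩. Define p: H → H by writing f = Σ c^λ_{S,a^λ_{S,T},T} in the cellular basis and setting p(f) := Σ a^λ_{S,T} · (c_T ∘ c_S). Then: (a) [p(f)] = [f] as trace classes; (b) p(f) = f for f ∈ K; and (c) for every f ∈ H there exists k ≥ 0 with p^k(f) ∈ K. -/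
open CategoryTheory

universe w v u

/-- A fibred strictly object-adapted cellular category over a commutative ring `R`. -/
structure FibredSOACC (R : Type*) [CommRing R] where
  /-- the underlying category -/
  C : Type u
  [instCat : Category.{v} C]
  [instPre : Preadditive C]
  [instLin : Linear R C]
  /-- the cell poset -/
  Λ : Type w
  [instPO : PartialOrder Λ]
  /-- descending chain condition -/
  dcc : WellFoundedLT Λ
  /-- the identification of `Λ` with a set of objects of `C` -/
  obj : Λ → C
  obj_inj : Function.Injective obj
  /-- the index sets `M(λ, X)` -/
  M : Λ → C → Type w
  /-- the index sets `E(X, λ)` -/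
  E : C → Λ → Type w
  [instFinM : ∀ l X, Fintype (M l X)]
  [instFinE : ∀ X l, Fintype (E X l)]
  /-- the fixed bijection `ι : M(λ,X) ≃ E(X,λ)` -/
  bij : ∀ l X, M l X ≃ E X l
  /-- cellular structure morphisms `c_S : λ ⟶ X` -/
  cM : ∀ {l X}, M l X → (obj l ⟶ X)
  /-- cellular structure morphisms `c_T : X ⟶ λ` -/
  cE : ∀ {X l}, E X l → (X ⟶ obj l)
  /-- the commutative fibre algebras `A_λ ⊆ End(λ)` -/
  A : ∀ l, Subalgebra R (End (obj l))
  A_comm : ∀ (l) (a b : A l), a * b = b * a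
  A_free : ∀ l, Module.Free R (A l)
  /-- the `R`-linear antiinvolution on each `A_λ` -/
  iotaA : ∀ l, A l →ₗ[R] A l
  iotaA_mul : ∀ (l) (a b : A l), iotaA l (a * b) = iotaA l b * iotaA l a
  iotaA_iotaA : ∀ (l) (a : A l), iotaA l (iotaA l a) = a
  /-- axiom (1): the `c^λ_{S,a,T} = c_S ∘ a ∘ c_T` span `Hom(X,Y)` over `R` ... -/
  basis_span : ∀ X Y : C,
    Submodule.span R {h : X ⟶ Y | ∃ (l : Λ) (T : E X l) (S : M l Y) (a : A l),
      h = cE T ≫ (a : End (obj l)) ≫ cM S} = ⊤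
  /-- ... and are linearly independent with coefficients in the `A_λ` -/
  basis_indep : ∀ (X Y : C) (s : Finset (Σ l : Λ, E X l × M l Y))
    (coef : ∀ p : Σ l : Λ, E X l × M l Y, A p.1),
    (∑ p ∈ s, cE p.2.1 ≫ ((coef p : End (obj p.1)) ≫ cM p.2.2)) = 0 →
      ∀ p ∈ s, coef p = 0
  /-- axiom (2): an `R`-linear contravariant involution ι extending the antiinvolutions -/
  invol : ∀ X Y : C, (X ⟶ Y) →ₗ[R] (Y ⟶ X)
  invol_comp : ∀ {X Y Z : C} (f : X ⟶ Y) (g : Y ⟶ Z),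
    invol X Z (f ≫ g) = invol Y Z g ≫ invol X Y f
  invol_id : ∀ X : C, invol X X (𝟙 X) = 𝟙 X
  invol_invol : ∀ {X Y : C} (f : X ⟶ Y), invol Y X (invol X Y f) = f
  invol_cM : ∀ {l X} (S : M l X), invol (obj l) X (cM S) = cE (bij l X S)
  invol_A : ∀ (l) (a : A l), invol (obj l) (obj l) (a : End (obj l)) = (iotaA l a : End (obj l))
  /-- axiom (3): the `A_λ`-valued structure function ℓ ... -/
  ell : ∀ {l : Λ} {Y Z : C}, (Y ⟶ Z) → M l Y → M l Z → A l
  /-- ... expressing `f ∘ c_S` as `Σ c_{S'} ℓ(f,S,S')` modulo `C_{<λ}` -/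
  lower_comp : ∀ {l : Λ} {Y Z : C} (f : Y ⟶ Z) (S : M l Y),
    cM S ≫ f - ∑ S' : M l Z, ((ell f S S' : End (obj l)) ≫ cM S') ∈
      Submodule.span R {h : obj l ⟶ Z | ∃ m : Λ, m < l ∧
        ∃ (T : E (obj l) m) (S' : M m Z) (a : A m),
          h = cE T ≫ (a : End (obj m)) ≫ cM S'}
  /-- axiom (4): `M(λ,λ)` is a single point `*` ... -/
  ptM : ∀ l, M l (obj l)
  ptM_unique : ∀ l (S : M l (obj l)), S = ptM l
  ptE_unique : ∀ l (T : E (obj l) l), T = bij l (obj l) (ptM l)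
  /-- ... with `c_* = 𝟙_λ` -/
  cM_pt : ∀ l, cM (ptM l) = 𝟙 (obj l)
  cE_pt : ∀ l, cE (bij l (obj l) (ptM l)) = 𝟙 (obj l)

attribute [instance] FibredSOACC.instCat FibredSOACC.instPre FibredSOACC.instLin
  FibredSOACC.instPO FibredSOACC.instFinM FibredSOACC.instFinE

variable {R : Type*} [CommRing R]

/-- The ideal `C_{≤λ}` of a fibred SOACC. -/
def FibredSOACC.idealLE (S : FibredSOACC R) (l : S.Λ) (X Y : S.C) : Submodule R (X ⟶ Y) :=
  Submodule.span R {h : X ⟶ Y | ∃ m : S.Λ, m ≤ l ∧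
    ∃ (T : S.E X m) (S' : S.M m Y) (a : S.A m),
      h = S.cE T ≫ (a : End (S.obj m)) ≫ S.cM S'}

/-- The ideal `C_{<λ}` of a fibred SOACC. -/
def FibredSOACC.idealLT (S : FibredSOACC R) (l : S.Λ) (X Y : S.C) : Submodule R (X ⟶ Y) :=
  Submodule.span R {h : X ⟶ Y | ∃ m : S.Λ, m < l ∧
    ∃ (T : S.E X m) (S' : S.M m Y) (a : S.A m),
      h = S.cE T ≫ (a : End (S.obj m)) ≫ S.cM S'}

/-- The direct sum `⊕_X End(X)` underlying the trace. -/
noncomputable def FibredSOACC.H (S : FibredSOACC R) : Type _ :=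
  DirectSum S.C (fun X : S.C => X ⟶ X)

noncomputable instance (S : FibredSOACC R) : AddCommGroup S.H :=
  inferInstanceAs (AddCommGroup (DirectSum S.C (fun X : S.C => X ⟶ X)))

/-- The canonical inclusion `End(X) → ⊕_X End(X)`. -/
noncomputable def FibredSOACC.ofEnd (S : FibredSOACC R) (X : S.C) (f : X ⟶ X) : S.H := by
  letI := Classical.decEq S.C
  exact show DirectSum S.C (fun X : S.C => X ⟶ X) from DirectSum.of (fun X : S.C => X ⟶ X) X f

/-- The subgroup of `⊕_X End(X)` spanned by the commutators `fg - gf`. -/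
noncomputable def FibredSOACC.commSub (S : FibredSOACC R) : AddSubgroup S.H :=
  AddSubgroup.closure {x | ∃ (X Y : S.C) (f : X ⟶ Y) (g : Y ⟶ X),
    x = S.ofEnd X (f ≫ g) - S.ofEnd Y (g ≫ f)}

/-- The trace (cocenter) `Tr(C) = ⊕_X End(X) / (fg - gf)`. -/
noncomputable def FibredSOACC.Tr (S : FibredSOACC R) : Type _ := S.H ⧸ S.commSub

/-- The class of an endomorphism in the trace. -/
noncomputable def FibredSOACC.trCls (S : FibredSOACC R) (X : S.C) (f : X ⟶ X) : S.Tr :=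
  QuotientAddGroup.mk (S.ofEnd X f)


section Aux

variable {R : Type*} [CommRing R]

/-- `ofEnd` as an additive monoid hom. -/
noncomputable def FibredSOACC.ofEndHom (S : FibredSOACC R) (X : S.C) : (X ⟶ X) →+ S.H :=
  letI := Classical.decEq S.C
  DirectSum.of (fun X : S.C => X ⟶ X) X

lemma FibredSOACC.ofEndHom_apply (S : FibredSOACC R) (X : S.C) (f : X ⟶ X) :
    S.ofEndHom X f = S.ofEnd X f := rfl

/-- If a set is closed under `R`-scaling, its `R`-span is contained in the additive
subgroup it generates. -/
lemma FibredSOACC.span_mem_closure {M : Type*} [AddCommGroup M] [Module R M] {s : Set M}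
    (hs : ∀ (r : R), ∀ x ∈ s, r • x ∈ s) {x : M} (hx : x ∈ Submodule.span R s) :
    x ∈ AddSubgroup.closure s := by
  refine Submodule.span_induction (fun x h => AddSubgroup.subset_closure h) (zero_mem _)
    (fun x y _ _ hx hy => add_mem hx hy) (fun r x _ hx => ?_) hx
  have h : AddSubgroup.closure s ≤
      (AddSubgroup.closure s).comap (DistribMulAction.toAddMonoidHom M r) := by
    rw [AddSubgroup.closure_le]
    intro y hy
    exact AddSubgroup.mem_comap.2 (AddSubgroup.subset_closure (hs r y hy))
  simpa using AddSubgroup.mem_comap.1 (h hx)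

lemma FibredSOACC.closure_map_mem {A B : Type*} [AddGroup A] [AddGroup B] (phi : A →+ B)
    (P : AddSubgroup B) {s : Set A} (h : ∀ x ∈ s, phi x ∈ P) {x : A}
    (hx : x ∈ AddSubgroup.closure s) : phi x ∈ P := by
  have hle : AddSubgroup.closure s ≤ P.comap phi :=
    (AddSubgroup.closure_le _).2 (fun x hxs => AddSubgroup.mem_comap.2 (h x hxs))
  exact AddSubgroup.mem_comap.1 (hle hx)

lemma FibredSOACC.iter_add {H : Type*} [AddCommGroup H] (p : H →+ H) (k : ℕ) (x y : H) :
    (⇑p)^[k] (x + y) = (⇑p)^[k] x + (⇑p)^[k] y := by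
  induction k generalizing x y with
  | zero => rfl
  | succ k ih =>
      rw [Function.iterate_succ_apply, Function.iterate_succ_apply,
        Function.iterate_succ_apply, map_add, ih]

lemma FibredSOACC.iter_neg {H : Type*} [AddCommGroup H] (p : H →+ H) (k : ℕ) (x : H) :
    (⇑p)^[k] (-x) = -((⇑p)^[k] x) := by
  induction k generalizing x with
  | zero => rfl
  | succ k ih =>
      rw [Function.iterate_succ_apply, Function.iterate_succ_apply, map_neg, ih]

end Aux

/-- Let `H := ⊕_X Hom(X,X)` in a fibred SOACC and
`K := ⊕_λ A_λ·⟨1_λ⟩`.  Let `p : H → H` be the additive operator defined on the cellular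
basis by `p(c_S ∘ a ∘ c_T) := a ∘ c_T ∘ c_S`.  Then (a) `[p(f)] = [f]` as trace classes;
(b) `p(f) = f` for `f ∈ K` (it fixes each `a ∈ A_λ ⊆ End(λ)`); and (c) for every `f ∈ H`
there exists `k ≥ 0` with `p^k(f) ∈ K`. -/
theorem FibredSOACC.trace_projection (S : FibredSOACC R)
    (p : S.H →+ S.H)
    (hp : ∀ (l : S.Λ) (X : S.C) (T : S.E X l) (a : S.A l) (Sm : S.M l X),
      p (S.ofEnd X (S.cE T ≫ (a : End (S.obj l)) ≫ S.cM Sm)) =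
        S.ofEnd (S.obj l) (S.cM Sm ≫ S.cE T ≫ (a : End (S.obj l)))) :
    (∀ h : S.H, (QuotientAddGroup.mk (p h) : S.Tr) = QuotientAddGroup.mk h) ∧
    (∀ (l : S.Λ) (a : S.A l),
      p (S.ofEnd (S.obj l) (show S.obj l ⟶ S.obj l from (a : End (S.obj l)))) =
        S.ofEnd (S.obj l) (show S.obj l ⟶ S.obj l from (a : End (S.obj l)))) ∧
    (∀ h : S.H, ∃ k : ℕ, (⇑p)^[k] h ∈
      AddSubgroup.closure {x : S.H | ∃ (l : S.Λ) (a : S.A l),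
        x = S.ofEnd (S.obj l) (show S.obj l ⟶ S.obj l from (a : End (S.obj l)))}) := by
  classical
  letI := Classical.decEq S.C
  set Kset : Set S.H := {x : S.H | ∃ (l : S.Λ) (a : S.A l),
      x = S.ofEnd (S.obj l) (show S.obj l ⟶ S.obj l from (a : End (S.obj l)))} with hKsetdef
  -- Part (b)
  have hb : ∀ (l : S.Λ) (a : S.A l),
      p (S.ofEnd (S.obj l) (show S.obj l ⟶ S.obj l from (a : End (S.obj l)))) =
        S.ofEnd (S.obj l) (show S.obj l ⟶ S.obj l from (a : End (S.obj l))) := by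
    intro l a
    have h := hp l (S.obj l) (S.bij l (S.obj l) (S.ptM l)) a (S.ptM l)
    rw [S.cE_pt, S.cM_pt] at h
    simpa using h
  -- `p` fixes the subgroup generated by `Kset`
  have hfix : ∀ x ∈ AddSubgroup.closure Kset, p x = x := by
    intro x hx
    refine AddSubgroup.closure_induction ?_ (map_zero p) ?_ ?_ hx
    · rintro x ⟨l, a, rfl⟩; exact hb l a
    · intro x y _ _ hx hy; rw [map_add, hx, hy]
    · intro x _ hx; rw [map_neg, hx]
  have hfixiter : ∀ y ∈ AddSubgroup.closure Kset, ∀ d : ℕ,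
      (⇑p)^[d] y ∈ AddSubgroup.closure Kset := by
    intro y hy d
    induction d with
    | zero => exact hy
    | succ d ih => rw [Function.iterate_succ_apply, hfix y hy]; exact ih
  have stable : ∀ (x : S.H) (k m : ℕ), k ≤ m →
      (⇑p)^[k] x ∈ AddSubgroup.closure Kset → (⇑p)^[m] x ∈ AddSubgroup.closure Kset := by
    intro x k m hkm hk
    obtain ⟨d, rfl⟩ := Nat.exists_eq_add_of_le hkm
    rw [Nat.add_comm, Function.iterate_add_apply]
    exact hfixiter _ hk d
  -- The subgroup of elements eventually mapped into `K`
  set Pset : AddSubgroup S.H :=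
    { carrier := {x : S.H | ∃ k : ℕ, (⇑p)^[k] x ∈ AddSubgroup.closure Kset}
      zero_mem' := ⟨0, zero_mem _⟩
      add_mem' := by
        rintro x y ⟨k, hk⟩ ⟨m, hm⟩
        refine ⟨max k m, ?_⟩
        rw [FibredSOACC.iter_add]
        exact add_mem (stable x k _ (le_max_left _ _) hk) (stable y m _ (le_max_right _ _) hm)
      neg_mem' := by
        rintro x ⟨k, hk⟩
        exact ⟨k, by rw [FibredSOACC.iter_neg]; exact neg_mem hk⟩ } with hPsetdef
  -- Scaling-closure of cellular basis sets
  have hbsmul : ∀ (X Y : S.C) (r : R),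
      ∀ h ∈ {h : X ⟶ Y | ∃ (l : S.Λ) (T : S.E X l) (S' : S.M l Y) (a : S.A l),
        h = S.cE T ≫ (a : End (S.obj l)) ≫ S.cM S'},
      r • h ∈ {h : X ⟶ Y | ∃ (l : S.Λ) (T : S.E X l) (S' : S.M l Y) (a : S.A l),
        h = S.cE T ≫ (a : End (S.obj l)) ≫ S.cM S'} := by
    rintro X Y r h ⟨l, T, S', a, rfl⟩
    refine ⟨l, T, S', r • a, ?_⟩
    show r • _ = S.cE T ≫ ((r • a : S.A l) : End (S.obj l)) ≫ S.cM S'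
    rw [show ((r • a : S.A l) : End (S.obj l)) = r • (a : End (S.obj l)) from rfl,
      Linear.smul_comp, Linear.comp_smul]
  have hbasis : ∀ (X Y : S.C) (f : X ⟶ Y),
      f ∈ AddSubgroup.closure {h : X ⟶ Y | ∃ (l : S.Λ) (T : S.E X l) (S' : S.M l Y) (a : S.A l),
        h = S.cE T ≫ (a : End (S.obj l)) ≫ S.cM S'} := by
    intro X Y f
    refine FibredSOACC.span_mem_closure (hbsmul X Y) ?_
    rw [S.basis_span X Y]
    exact Submodule.mem_top
  -- The key induction for part (c): basis elements are eventually mapped into `K`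
  have key : ∀ (l : S.Λ) (X : S.C) (T : S.E X l) (a : S.A l) (Sm : S.M l X),
      S.ofEnd X (S.cE T ≫ (a : End (S.obj l)) ≫ S.cM Sm) ∈ Pset := by
    refine fun l => S.dcc.wf.induction
      (C := fun l => ∀ (X : S.C) (T : S.E X l) (a : S.A l) (Sm : S.M l X),
        S.ofEnd X (S.cE T ≫ (a : End (S.obj l)) ≫ S.cM Sm) ∈ Pset) l ?_
    intro l ih X T a Sm
    set f : X ⟶ S.obj l := S.cE T ≫ (a : End (S.obj l)) with hf
    have hdec := S.lower_comp f Sm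
    letI : Unique (S.M l (S.obj l)) := ⟨⟨S.ptM l⟩, fun S' => S.ptM_unique l S'⟩
    set a0 : S.A l := S.ell f Sm (S.ptM l) with ha0
    have hsum : (∑ S' : S.M l (S.obj l), ((S.ell f Sm S' : End (S.obj l)) ≫ S.cM S'))
        = (a0 : End (S.obj l)) := by
      rw [Fintype.sum_unique]
      show (S.ell f Sm (S.ptM l) : End (S.obj l)) ≫ S.cM (S.ptM l) = _
      rw [S.cM_pt, Category.comp_id]
    -- membership after one application of `p`
    have hmem : p (S.ofEnd X (S.cE T ≫ (a : End (S.obj l)) ≫ S.cM Sm)) ∈ Pset := by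
      rw [hp l X T a Sm]
      have hdecomp : S.cM Sm ≫ S.cE T ≫ (a : End (S.obj l)) =
          (∑ S' : S.M l (S.obj l), ((S.ell f Sm S' : End (S.obj l)) ≫ S.cM S')) +
            (S.cM Sm ≫ f -
              ∑ S' : S.M l (S.obj l), ((S.ell f Sm S' : End (S.obj l)) ≫ S.cM S')) := by
        rw [hf]; abel
      rw [← S.ofEndHom_apply, hdecomp, map_add]
      refine add_mem ?_ ?_
      · rw [hsum, S.ofEndHom_apply]
        exact ⟨0, AddSubgroup.subset_closure ⟨l, a0, rfl⟩⟩
      · -- the lower term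
        refine FibredSOACC.closure_map_mem (S.ofEndHom (S.obj l)) Pset ?_
          (FibredSOACC.span_mem_closure ?_ hdec)
        · rintro g ⟨m, hm, T', S', a', rfl⟩
          rw [S.ofEndHom_apply]
          exact ih m hm (S.obj l) T' a' S'
        · rintro r g ⟨m, hm, T', S', a', rfl⟩
          refine ⟨m, hm, T', S', r • a', ?_⟩
          show r • _ = S.cE T' ≫ ((r • a' : S.A m) : End (S.obj m)) ≫ S.cM S'
          rw [show ((r • a' : S.A m) : End (S.obj m)) = r • (a' : End (S.obj m)) from rfl,
            Linear.smul_comp, Linear.comp_smul]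
    obtain ⟨k, hk⟩ := hmem
    exact ⟨k + 1, by rw [Function.iterate_succ_apply]; exact hk⟩
  -- Part (a)
  have parta : ∀ h : S.H, (QuotientAddGroup.mk (p h) : S.Tr) = QuotientAddGroup.mk h := by
    set Aset : AddSubgroup S.H :=
      { carrier := {x : S.H | (QuotientAddGroup.mk (p x) : S.Tr) = QuotientAddGroup.mk x}
        zero_mem' := by show (QuotientAddGroup.mk (p 0) : S.Tr) = _; rw [map_zero]
        add_mem' := by
          intro x y hx hy
          show (QuotientAddGroup.mk (p (x + y)) : S.Tr) = QuotientAddGroup.mk (x + y)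
          rw [map_add]
          show (QuotientAddGroup.mk (p x + p y) : S.Tr) = QuotientAddGroup.mk (x + y)
          rw [QuotientAddGroup.mk_add, QuotientAddGroup.mk_add, hx, hy]
        neg_mem' := by
          intro x hx
          show (QuotientAddGroup.mk (p (-x)) : S.Tr) = QuotientAddGroup.mk (-x)
          rw [map_neg, QuotientAddGroup.mk_neg, QuotientAddGroup.mk_neg, hx] } with hAsetdef
    have hBA : ∀ (X : S.C) (g : X ⟶ X),
        g ∈ {h : X ⟶ X | ∃ (l : S.Λ) (T : S.E X l) (S' : S.M l X) (a : S.A l),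
          h = S.cE T ≫ (a : End (S.obj l)) ≫ S.cM S'} → S.ofEndHom X g ∈ Aset := by
      rintro X g ⟨l, T, Sm, a, rfl⟩
      show (QuotientAddGroup.mk (p (S.ofEndHom X _)) : S.Tr) = QuotientAddGroup.mk _
      rw [S.ofEndHom_apply, hp l X T a Sm]
      rw [QuotientAddGroup.eq]
      have hgen : S.ofEnd X ((S.cE T ≫ (a : End (S.obj l))) ≫ S.cM Sm) -
          S.ofEnd (S.obj l) (S.cM Sm ≫ (S.cE T ≫ (a : End (S.obj l)))) ∈ S.commSub :=
        AddSubgroup.subset_closure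
          ⟨X, S.obj l, S.cE T ≫ (a : End (S.obj l)), S.cM Sm, rfl⟩
      simpa [Category.assoc, sub_eq_neg_add] using hgen
    have hall : ∀ x : DirectSum S.C (fun X : S.C => X ⟶ X), x ∈ Aset := by
      intro x
      induction x using DirectSum.induction_on with
      | zero => exact zero_mem _
      | of i f =>
          exact FibredSOACC.closure_map_mem (S.ofEndHom i) Aset (hBA i) (hbasis i i f)
      | add x y hx hy => exact add_mem hx hy
    intro h
    exact hall h
  refine ⟨parta, hb, ?_⟩
  -- Part (c)
  have hall : ∀ x : DirectSum S.C (fun X : S.C => X ⟶ X), x ∈ Pset := by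
    intro x
    induction x using DirectSum.induction_on with
    | zero => exact zero_mem _
    | of i f =>
        refine FibredSOACC.closure_map_mem (S.ofEndHom i) Pset ?_ (hbasis i i f)
        rintro g ⟨l, T, S', a, rfl⟩
        rw [S.ofEndHom_apply]
        exact key l i T a S'
    | add x y hx hy => exact add_mem hx hy
  intro h
  exact hall h
end

section
/- Let p be the operator on H = ⊕_X Hom(X,X) of a fibred SOACC defined by cyclically rotating cellular basis elements: p(c_S ∘ a ∘ c_T) = a ∘ c_T ∘ c_S. Then for g = c^λ_{S,a,T} ∈ Hom(X,Y) and h = c^μ_{U,b,V} ∈ Hom(Y,X) with λ, μ both minimal cells and λ = μ, one has p(g∘h) = p(h∘g); explicitly both equal a·b·φ^λ(T,U)·φ^λ(V,S) ∈ A_λ, using commutativity of A_λ. -/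
open CategoryTheory

universe w v u

variable {R : Type*} [CommRing R]

/-- Let `p` be the operator on `H = ⊕_X Hom(X,X)` of a fibred SOACC defined
by cyclically rotating cellular basis elements: `p(c_S ∘ a ∘ c_T) = a ∘ c_T ∘ c_S`.  For
`g = c^λ_{S,a,T} ∈ Hom(X,Y)` and `h = c^μ_{U,b,V} ∈ Hom(Y,X)` with `λ = μ` a minimal cell
(so that `End(λ) = A_λ` exactly and the pairings `φ^λ(T,U) = c_T ∘ c_U` and `φ^λ(V,S)` lie
in `A_λ`), one has `p(g∘h) = p(h∘g)`, and both equal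
`a·b·φ^λ(T,U)·φ^λ(V,S) ∈ A_λ`, using commutativity of `A_λ`. -/
theorem FibredSOACC.p_minimal_cell (S : FibredSOACC R)
    (p : S.H →+ S.H)
    (hp : ∀ (l : S.Λ) (X : S.C) (T : S.E X l) (a : S.A l) (Sm : S.M l X),
      p (S.ofEnd X (S.cE T ≫ (a : End (S.obj l)) ≫ S.cM Sm)) =
        S.ofEnd (S.obj l) (S.cM Sm ≫ S.cE T ≫ (a : End (S.obj l))))
    (l : S.Λ) (hmin : ∀ m : S.Λ, ¬ m < l)
    {X Y : S.C} (Sm : S.M l Y) (T : S.E X l) (U : S.M l X) (V : S.E Y l)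
    (a b : S.A l) (φTU φVS : S.A l)
    (hφTU : (φTU : End (S.obj l)) = S.cM U ≫ S.cE T)
    (hφVS : (φVS : End (S.obj l)) = S.cM Sm ≫ S.cE V) :
    p (S.ofEnd Y ((S.cE V ≫ (b : End (S.obj l)) ≫ S.cM U) ≫
        (S.cE T ≫ (a : End (S.obj l)) ≫ S.cM Sm))) =
      p (S.ofEnd X ((S.cE T ≫ (a : End (S.obj l)) ≫ S.cM Sm) ≫
        (S.cE V ≫ (b : End (S.obj l)) ≫ S.cM U))) ∧
    p (S.ofEnd Y ((S.cE V ≫ (b : End (S.obj l)) ≫ S.cM U) ≫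
        (S.cE T ≫ (a : End (S.obj l)) ≫ S.cM Sm))) =
      S.ofEnd (S.obj l)
        (show S.obj l ⟶ S.obj l from ((a * b * φTU * φVS : S.A l) : End (S.obj l))) := by
  classical
  have comm : ∀ x y : S.A l, x * y = y * x := S.A_comm l
  letI : CommRing (S.A l) := { (inferInstance : Ring (S.A l)) with mul_comm := comm }
  have e1 : (S.cE V ≫ (b : End (S.obj l)) ≫ S.cM U) ≫
      (S.cE T ≫ (a : End (S.obj l)) ≫ S.cM Sm)
      = S.cE V ≫ ((a * φTU * b : S.A l) : End (S.obj l)) ≫ S.cM Sm := by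
    simp only [MulMemClass.coe_mul, End.mul_def, hφTU, Category.assoc]
  have e2 : (S.cE T ≫ (a : End (S.obj l)) ≫ S.cM Sm) ≫
      (S.cE V ≫ (b : End (S.obj l)) ≫ S.cM U)
      = S.cE T ≫ ((b * φVS * a : S.A l) : End (S.obj l)) ≫ S.cM U := by
    simp only [MulMemClass.coe_mul, End.mul_def, hφVS, Category.assoc]
  have r1 := hp l Y V (a * φTU * b) Sm
  have r2 := hp l X T (b * φVS * a) U
  have key1 : S.cM Sm ≫ S.cE V ≫ ((a * φTU * b : S.A l) : End (S.obj l))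
      = ((a * b * φTU * φVS : S.A l) : End (S.obj l)) := by
    rw [← Category.assoc, ← hφVS, ← End.mul_def, ← MulMemClass.coe_mul]
    congr 1
    ring
  have key2 : S.cM U ≫ S.cE T ≫ ((b * φVS * a : S.A l) : End (S.obj l))
      = ((a * b * φTU * φVS : S.A l) : End (S.obj l)) := by
    rw [← Category.assoc, ← hφTU, ← End.mul_def, ← MulMemClass.coe_mul]
    congr 1
    ring
  rw [e1, e2, r1, r2, key1, key2]
  exact ⟨rfl, rfl⟩
end

section
/- In the trace of the full graded Hecke category D*, the relation f · 1_{B_s} = 1_{B_s} · (s·f) + (f − s·f) holds for every polynomial f ∈ R and simple reflection s, where 1_{B_s} is the class of the identity of the Bott–Samelson object B_s and R = O(h) acts via endomorphisms of the monoidal unit; equivalently, writing 1_{B_s} = 1 + T_s, one has f·T_s = T_s·(s·f). -/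
set_option synthInstance.maxHeartbeats 1000000
set_option maxHeartbeats 1600000

open CategoryTheory MonoidalCategory

universe v u

/-- An (axiomatized) diagrammatic Hecke category `D = D(W,S,h)` of Elias–Williamson,
attached to a Coxeter system `(W,S)` and a realization over `k`: a graded `k`-linear
monoidal category whose objects are the sequences of simple reflections (Bott–Samelson
objects), with `W` acting on the polynomial ring `R = END(𝟙)` of the realization, and
satisfying the one-colour diagrammatic relations used in this paper: the barbell relation
(5.1), the polynomial forcing relation (5.2), and the vanishing of the circle. -/
structure ElWiHecke (k : Type*) [CommRing k] {B W : Type*} [Group W]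
    (Mx : CoxeterMatrix B) (cs : CoxeterSystem Mx W) where
  /-- the underlying category -/
  C : Type u
  [instCat : Category.{v} C]
  [instPre : Preadditive C]
  [instLin : Linear k C]
  [instMon : MonoidalCategory C]
  [instMonPre : MonoidalPreadditive C]
  [instMonLin : MonoidalLinear k C]
  /-- the Bott–Samelson objects, indexed by sequences of simple reflections -/
  obj : List B → C
  obj_nil : obj [] = 𝟙_ C
  obj_append : ∀ w₁ w₂ : List B, obj (w₁ ++ w₂) = obj w₁ ⊗ obj w₂
  /-- the grading on morphism spaces -/
  grading : ∀ X Y : C, ℤ → Submodule k (X ⟶ Y)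
  grading_internal : ∀ X Y : C, DirectSum.IsInternal (grading X Y)
  id_mem : ∀ X : C, 𝟙 X ∈ grading X X 0
  comp_mem : ∀ {X Y Z : C} {i j : ℤ} (f : X ⟶ Y) (g : Y ⟶ Z),
    f ∈ grading X Y i → g ∈ grading Y Z j → f ≫ g ∈ grading X Z (i + j)
  tensor_mem : ∀ {X X' Y Y' : C} {i j : ℤ} (f : X ⟶ Y) (g : X' ⟶ Y'),
    f ∈ grading X Y i → g ∈ grading X' Y' j →
      (f ⊗ₘ g) ∈ grading (X ⊗ X') (Y ⊗ Y') (i + j)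
  /-- the degree-zero part of `END(𝟙)` is `k` -/
  unit_deg_zero : ∀ f : 𝟙_ C ⟶ 𝟙_ C, f ∈ grading (𝟙_ C) (𝟙_ C) 0 →
    ∃ r : k, f = r • 𝟙 (𝟙_ C)
  /-- the action of `W` on the polynomial ring `R = END(𝟙)` of the realization -/
  act : W →* RingAut (End (𝟙_ C))
  /-- the dot morphisms (degree `1`) -/
  dotIn : (s : B) → (𝟙_ C ⟶ obj [s])
  dotOut : (s : B) → (obj [s] ⟶ 𝟙_ C)
  dotIn_deg : ∀ s, dotIn s ∈ grading (𝟙_ C) (obj [s]) 1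
  dotOut_deg : ∀ s, dotOut s ∈ grading (obj [s]) (𝟙_ C) 1
  /-- the simple roots `α_s ∈ R` -/
  alpha : B → (𝟙_ C ⟶ 𝟙_ C)
  /-- the barbell relation (5.1) -/
  barbell : ∀ s, dotIn s ≫ dotOut s = alpha s
  /-- the Demazure (divided difference) operators `∂_s` -/
  dem : B → (𝟙_ C ⟶ 𝟙_ C) → (𝟙_ C ⟶ 𝟙_ C)
  dem_spec : ∀ (s : B) (f : 𝟙_ C ⟶ 𝟙_ C),
    dem s f ≫ alpha s = f - (show 𝟙_ C ⟶ 𝟙_ C from act (cs.simple s) f)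
  /-- the polynomial forcing relation (5.2):
  `f·1_{B_s} = 1_{B_s}·(s·f) + ∂_s(f)·(broken strand)` -/
  forcing : ∀ (s : B) (f : 𝟙_ C ⟶ 𝟙_ C),
    (λ_ (obj [s])).inv ≫ (f ▷ obj [s]) ≫ (λ_ (obj [s])).hom =
      (ρ_ (obj [s])).inv ≫
        (obj [s] ◁ (show 𝟙_ C ⟶ 𝟙_ C from act (cs.simple s) f)) ≫ (ρ_ (obj [s])).hom
      + dotOut s ≫ dem s f ≫ dotIn s
  /-- `B_s` is self-dual: cup and cap morphisms -/
  cup : (s : B) → (𝟙_ C ⟶ obj [s] ⊗ obj [s])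
  cap : (s : B) → (obj [s] ⊗ obj [s] ⟶ 𝟙_ C)
  zigzag₁ : ∀ s, (ρ_ (obj [s])).inv ≫ (obj [s] ◁ cup s) ≫ (α_ _ _ _).inv ≫
    (cap s ▷ obj [s]) ≫ (λ_ (obj [s])).hom = 𝟙 (obj [s])
  zigzag₂ : ∀ s, (λ_ (obj [s])).inv ≫ (cup s ▷ obj [s]) ≫ (α_ _ _ _).hom ≫
    (obj [s] ◁ cap s) ≫ (ρ_ (obj [s])).hom = 𝟙 (obj [s])
  /-- the closed circle of colour `s` is zero -/
  circle_zero : ∀ s, cup s ≫ cap s = 0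

attribute [instance] ElWiHecke.instCat ElWiHecke.instPre ElWiHecke.instLin
  ElWiHecke.instMon ElWiHecke.instMonPre ElWiHecke.instMonLin

variable {k : Type*} [CommRing k] {B W : Type*} [Group W]
  {Mx : CoxeterMatrix B} {cs : CoxeterSystem Mx W}

namespace ElWiHecke

variable (D : ElWiHecke k Mx cs)

/-- The Bott–Samelson object `B_s`. -/
def Bs (s : B) : D.C := D.obj [s]

/-- `⊕_X END(X)`. -/
noncomputable def HAll : Type _ := DirectSum D.C (fun X : D.C => X ⟶ X)

noncomputable instance : AddCommGroup D.HAll :=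
  inferInstanceAs (AddCommGroup (DirectSum D.C (fun X : D.C => X ⟶ X)))

noncomputable instance : Module k D.HAll :=
  inferInstanceAs (Module k (DirectSum D.C (fun X : D.C => X ⟶ X)))

/-- The inclusion `END(X) → ⊕_X END(X)`. -/
noncomputable def ofAll (X : D.C) (f : X ⟶ X) : D.HAll := by
  letI := Classical.decEq D.C
  exact show DirectSum D.C (fun X : D.C => X ⟶ X) from
    DirectSum.of (fun X : D.C => X ⟶ X) X f

/-- The commutators `fg - gf`. -/
noncomputable def commAll : Submodule k D.HAll :=
  Submodule.span k {x : D.HAll | ∃ (X Y : D.C) (f : X ⟶ Y) (g : Y ⟶ X),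
    x = D.ofAll X (f ≫ g) - D.ofAll Y (g ≫ f)}

/-- The trace `Tr(D*)` of the all-degrees Hecke category. -/
noncomputable def TrAll : Type _ := D.HAll ⧸ D.commAll

noncomputable instance : AddCommGroup D.TrAll := by
  unfold ElWiHecke.TrAll; infer_instance

noncomputable instance : Module k D.TrAll := by
  unfold ElWiHecke.TrAll; infer_instance

/-- The trace class of an endomorphism in `Tr(D*)`. -/
noncomputable def trAll (X : D.C) (f : X ⟶ X) : D.TrAll :=
  Submodule.Quotient.mk (D.ofAll X f)

end ElWiHecke

namespace ElWiHecke

variable (D : ElWiHecke k Mx cs)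

/-- Left multiplication by a polynomial `f ∈ R` on the identity of `B_s`. -/
noncomputable def polyLeft (s : B) (f : 𝟙_ D.C ⟶ 𝟙_ D.C) : D.obj [s] ⟶ D.obj [s] :=
  (λ_ (D.obj [s])).inv ≫ (f ▷ D.obj [s]) ≫ (λ_ (D.obj [s])).hom

/-- Right multiplication by a polynomial `g ∈ R` on the identity of `B_s`. -/
noncomputable def polyRight (s : B) (g : 𝟙_ D.C ⟶ 𝟙_ D.C) : D.obj [s] ⟶ D.obj [s] :=
  (ρ_ (D.obj [s])).inv ≫ (D.obj [s] ◁ g) ≫ (ρ_ (D.obj [s])).hom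

theorem trAll_comp_comm {X Y : D.C} (a : X ⟶ Y) (b : Y ⟶ X) :
    D.trAll X (a ≫ b) = D.trAll Y (b ≫ a) :=
  (Submodule.Quotient.eq D.commAll).mpr (Submodule.subset_span ⟨X, Y, a, b, rfl⟩)

theorem ofAll_add (X : D.C) (a b : X ⟶ X) :
    D.ofAll X (a + b) = D.ofAll X a + D.ofAll X b := by
  classical
  exact map_add (DirectSum.of (fun X : D.C => X ⟶ X) X) a b

theorem trAll_add (X : D.C) (a b : X ⟶ X) :
    D.trAll X (a + b) = D.trAll X a + D.trAll X b := by
  rw [trAll, ofAll_add]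
  rfl

theorem polyLeft_eq_polyRight_add (s : B) (f : 𝟙_ D.C ⟶ 𝟙_ D.C) :
    D.polyLeft s f = D.polyRight s (D.act (cs.simple s) f) + D.dotOut s ≫ D.dem s f ≫ D.dotIn s :=
  D.forcing s f

/-- Closing up the broken strand on the annulus produces a barbell. -/
theorem trAll_dotOut_dem_dotIn (s : B) (f : 𝟙_ D.C ⟶ 𝟙_ D.C) :
    D.trAll (D.obj [s]) (D.dotOut s ≫ D.dem s f ≫ D.dotIn s) =
      D.trAll (𝟙_ D.C) (f - (show 𝟙_ D.C ⟶ 𝟙_ D.C from D.act (cs.simple s) f)) := by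
  rw [trAll_comp_comm, Category.assoc, D.barbell, D.dem_spec]

/-- In the trace of the full graded Hecke category `D*`, the relation
`f · 1_{B_s} = 1_{B_s} · (s·f) + (f − s·f)` holds for every polynomial `f ∈ R = END(𝟙)`
and every simple reflection `s` (equivalently, writing `1_{B_s} = 1 + T_s`, one has
`f·T_s = T_s·(s·f)` in `Tr(D*) = ℤ[W] ⋉ R`). -/
theorem trace_poly_forcing (s : B) (f : 𝟙_ D.C ⟶ 𝟙_ D.C) :
    D.trAll (D.obj [s]) (D.polyLeft s f) =
      D.trAll (D.obj [s]) (D.polyRight s (show 𝟙_ D.C ⟶ 𝟙_ D.C from D.act (cs.simple s) f))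
      + D.trAll (𝟙_ D.C) (f - (show 𝟙_ D.C ⟶ 𝟙_ D.C from D.act (cs.simple s) f)) := by
  rw [polyLeft_eq_polyRight_add, trAll_add, trAll_dotOut_dem_dotIn]

end ElWiHecke
end
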